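/- If m = p^u and n = q^v with p, q primes and gcd(m, r^k − 1) = 1 for all 1 ≤ k < n, then the normal subgroups of ZM(m,n,r) form a chain of length u + v: ⟨1⟩ ⊂ ⟨a^{p^{u-1}}⟩ ⊂ ... ⊂ ⟨a⟩ ⊂ ⟨a, b^{q^{v-1}}⟩ ⊂ ... ⊂ ⟨a, b⟩ = ZM(m,n,r); in particular ZM(m,n,r) has exactly u + v + 1 normal subgroups. -/

import Mathlib

/-!
The presentation identifies `ZM m n r` with `ℤ/m ⋊ ℤ/n`, where the generator of `ℤ/n` acts
on `A = ℤ/m` by multiplication by `r`. By the gcd hypothesis, every element `h ≠ 1` of `ℤ/n`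
acts through a unit `c` with `c - 1` again a unit, so the commutators of an element outside `A`
with `A` exhaust `A`: a normal subgroup lies in `A` or contains it. Conversely, subgroups of the
cyclic group `A` are characteristic, and those containing `A` are pulled back from the abelian
quotient `ℤ/n`, so all of them are normal. In a cyclic group of order `p ^ u` the subgroups form
a chain of `u + 1` members, which gives `(u + 1) + (v + 1) - 1` normal subgroups in a chain.
-/

def ZMrels (m n : ℕ) (r : ℤ) : Set (FreeGroup Bool) :=
  {FreeGroup.of true ^ m, FreeGroup.of false ^ n,
   (FreeGroup.of false)⁻¹ * FreeGroup.of true * FreeGroup.of false * (FreeGroup.of true) ^ (-r)}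

abbrev ZM (m n : ℕ) (r : ℤ) : Type := PresentedGroup (ZMrels m n r)

def ZMa (m n : ℕ) (r : ℤ) : ZM m n r := PresentedGroup.of true

def ZMb (m n : ℕ) (r : ℤ) : ZM m n r := PresentedGroup.of false

open Subgroup

namespace IsCyclic

variable {G : Type*} [CommGroup G] [IsCyclic G] [Finite G]

theorem eq_ker_powMonoidHom_card (K : Subgroup G) :
    K = (powMonoidHom (Nat.card K) : G →* G).ker := by
  refine eq_of_le_of_card_ge (fun x hx => ?_) ?_
  · exact congrArg Subtype.val (pow_card_eq_one' (G := K) (x := ⟨x, hx⟩))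
  · rw [card_powMonoidHom_ker, Nat.gcd_eq_right (card_subgroup_dvd_card K)]

theorem subgroup_le_of_card_dvd {H K : Subgroup G} (h : Nat.card H ∣ Nat.card K) : H ≤ K := by
  obtain ⟨d, hd⟩ := h
  intro x hx
  rw [eq_ker_powMonoidHom_card K]
  change x ^ Nat.card K = 1
  have hxH : x ^ Nat.card H = 1 := (eq_ker_powMonoidHom_card H).le hx
  rw [hd, pow_mul, hxH, one_pow]

theorem characteristic (S : Subgroup G) : S.Characteristic :=
  characteristic_iff_map_le.mpr fun ϕ =>
    subgroup_le_of_card_dvd (by rw [card_map_of_injective ϕ.injective])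

theorem card_subgroup : Nat.card (Subgroup G) = (Nat.card G).divisors.card := by
  have hinj : Function.Injective fun K : Subgroup G => Nat.card K := fun H K h =>
    le_antisymm (subgroup_le_of_card_dvd h.dvd) (subgroup_le_of_card_dvd h.symm.dvd)
  have hrange : Set.range (fun K : Subgroup G => Nat.card K) = (Nat.card G).divisors := by
    ext d
    simp only [Set.mem_range, Finset.mem_coe, Nat.mem_divisors, ne_eq, Nat.card_pos.ne',
      not_false_eq_true, and_true]
    refine ⟨fun ⟨K, hK⟩ => hK ▸ card_subgroup_dvd_card K, fun hd => ?_⟩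
    refine ⟨(powMonoidHom (Nat.card G / d) : G →* G).range, ?_⟩
    rw [card_powMonoidHom_range, Nat.gcd_eq_right (Nat.div_dvd_of_dvd hd),
      Nat.div_div_self hd Nat.card_pos.ne']
  rw [← Nat.card_range_of_injective hinj, hrange, Nat.card_coe_set_eq, Set.ncard_coe_finset]

variable {p u : ℕ} (hp : p.Prime) (hG : Nat.card G = p ^ u)
include hp hG

theorem isChain_subgroup_of_card_eq_prime_pow : IsChain (· ≤ ·) (Set.univ : Set (Subgroup G)) := by
  intro H _ K _ _
  obtain ⟨i, -, hi⟩ := (Nat.dvd_prime_pow hp).1 (hG ▸ card_subgroup_dvd_card H)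
  obtain ⟨j, -, hj⟩ := (Nat.dvd_prime_pow hp).1 (hG ▸ card_subgroup_dvd_card K)
  rcases le_total i j with h | h
  · exact .inl (subgroup_le_of_card_dvd (hi ▸ hj ▸ pow_dvd_pow p h))
  · exact .inr (subgroup_le_of_card_dvd (hi ▸ hj ▸ pow_dvd_pow p h))

theorem card_subgroup_of_card_eq_prime_pow : Nat.card (Subgroup G) = u + 1 := by
  rw [card_subgroup, hG, Nat.divisors_prime_pow hp, Finset.card_map, Finset.card_range]

end IsCyclic

theorem Set.isChain_Iic_union_Ici {α : Type*} [Preorder α] {a : α}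
    (h₁ : IsChain (· ≤ ·) (Set.Iic a)) (h₂ : IsChain (· ≤ ·) (Set.Ici a)) :
    IsChain (· ≤ ·) (Set.Iic a ∪ Set.Ici a) := by
  rintro x (hx | hx) y (hy | hy) hxy
  · exact h₁ hx hy hxy
  · exact .inl (le_trans hx hy)
  · exact .inr (le_trans hy hx)
  · exact h₂ hx hy hxy

theorem Set.ncard_Iic_union_Ici {α : Type*} [PartialOrder α] [Finite α] (a : α) :
    (Set.Iic a ∪ Set.Ici a).ncard + 1 = (Set.Iic a).ncard + (Set.Ici a).ncard := by
  rw [← Set.ncard_union_add_ncard_inter _ _ (Set.toFinite _) (Set.toFinite _), Set.Iic_inter_Ici,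
    Set.Icc_self, Set.ncard_singleton]

namespace Subgroup

variable {G G' : Type*} [Group G] [Group G'] (f : G →* G')

theorem range_map : Set.range (map f) = Set.Iic f.range := by
  ext K
  refine ⟨fun ⟨L, hL⟩ => hL ▸ map_le_range f L, fun hK => ⟨K.comap f, ?_⟩⟩
  rw [map_comap_eq, inf_eq_right.mpr hK]

theorem range_comap : Set.range (comap f) = Set.Ici f.ker := by
  ext K
  refine ⟨fun ⟨L, hL⟩ => hL ▸ ker_le_comap f L, fun hK => ⟨K.map f, ?_⟩⟩
  rw [comap_map_eq, sup_eq_left.mpr hK]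

end Subgroup

namespace SemidirectProduct

section

variable {N H : Type*} [Group N] [Group H] {φ : H →* MulAut N}

theorem normal_of_ker_rightHom_le [IsMulCommutative H] {K : Subgroup (N ⋊[φ] H)}
    (hK : (rightHom : N ⋊[φ] H →* H).ker ≤ K) : K.Normal := by
  rw [← sup_eq_left.mpr hK, ← comap_map_eq]
  exact (normal_of_isMulCommutative _).comap _

end

section

variable {N H : Type*} [CommGroup N] [Group H] {φ : H →* MulAut N}

theorem mul_inl_mul_inv (g : N ⋊[φ] H) (x : N) : g * inl x * g⁻¹ = inl (φ g.right x) := by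
  ext <;> simp [mul_comm]

theorem normal_of_le_ker_rightHom [IsCyclic N] [Finite N] {K : Subgroup (N ⋊[φ] H)}
    (hK : K ≤ (rightHom : N ⋊[φ] H →* H).ker) : K.Normal := by
  constructor
  intro k hk g
  obtain ⟨x, rfl⟩ : k ∈ (inl : N →* N ⋊[φ] H).range := by
    rw [range_inl_eq_ker_rightHom]; exact hK hk
  rw [mul_inl_mul_inv]
  exact (characteristic_iff_map_le.mp (IsCyclic.characteristic (K.comap inl)) (φ g.right))
    (mem_map_of_mem _ hk)

theorem ker_rightHom_le_of_normal (hφ : ∀ h ≠ 1, Function.Surjective fun y => φ h y / y)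
    {K : Subgroup (N ⋊[φ] H)} (hK : K.Normal) (hKA : ¬ K ≤ (rightHom : N ⋊[φ] H →* H).ker) :
    (rightHom : N ⋊[φ] H →* H).ker ≤ K := by
  obtain ⟨g, hgK, hg⟩ := SetLike.not_le_iff_exists.mp hKA
  intro z hz
  obtain ⟨x, rfl⟩ : z ∈ (inl : N →* N ⋊[φ] H).range := by
    rw [range_inl_eq_ker_rightHom]; exact hz
  obtain ⟨y, rfl⟩ := hφ g.right hg x
  have hcomm : g * (inl y * g⁻¹ * (inl y)⁻¹) ∈ K :=
    K.mul_mem hgK (hK.conj_mem _ (K.inv_mem hgK) _)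
  convert hcomm using 1
  rw [← mul_assoc, ← mul_assoc, mul_inl_mul_inv, ← map_inv, ← map_mul, ← div_eq_mul_inv]

end

section

variable {N H : Type*} [CommGroup N] [CommGroup H] [IsCyclic N] [Finite N]
  {φ : H →* MulAut N} (hφ : ∀ h ≠ 1, Function.Surjective fun y => φ h y / y)
include hφ

theorem setOf_normal_eq :
    {K : Subgroup (N ⋊[φ] H) | K.Normal} =
      Set.Iic (rightHom : N ⋊[φ] H →* H).ker ∪ Set.Ici rightHom.ker := by
  ext K
  refine ⟨fun hK => ?_, ?_⟩
  · by_cases hKA : K ≤ rightHom.ker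
    · exact .inl hKA
    · exact .inr (ker_rightHom_le_of_normal hφ hK hKA)
  · rintro (hK | hK)
    · exact normal_of_le_ker_rightHom hK
    · exact normal_of_ker_rightHom_le hK

theorem isChain_setOf_normal (hN : IsChain (· ≤ ·) (Set.univ : Set (Subgroup N)))
    (hH : IsChain (· ≤ ·) (Set.univ : Set (Subgroup H))) :
    IsChain (· ≤ ·) {K : Subgroup (N ⋊[φ] H) | K.Normal} := by
  rw [setOf_normal_eq hφ]
  refine Set.isChain_Iic_union_Ici ?_ ?_
  · rw [← range_inl_eq_ker_rightHom, ← range_map, ← Set.image_univ]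
    exact hN.image_of_map_rel _ _ _ fun _ _ h => map_mono h
  · rw [← range_comap, ← Set.image_univ]
    exact hH.image_of_map_rel _ _ _ fun _ _ h => comap_mono h

theorem card_normal_add_one [Finite H] :
    Nat.card {K : Subgroup (N ⋊[φ] H) // K.Normal} + 1 =
      Nat.card (Subgroup N) + Nat.card (Subgroup H) := by
  have : Finite (N ⋊[φ] H) := .of_equiv _ equivProd.symm
  change Nat.card {K : Subgroup (N ⋊[φ] H) | K.Normal} + 1 = _
  rw [Nat.card_coe_set_eq, setOf_normal_eq hφ, Set.ncard_Iic_union_Ici,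
    ← range_comap, ← range_inl_eq_ker_rightHom, ← range_map,
    Set.ncard_range_of_injective (map_injective inl_injective),
    Set.ncard_range_of_injective (comap_injective rightHom_surjective)]

end

end SemidirectProduct

open Multiplicative

section ZModHom

variable {G : Type*} [Group G] {n : ℕ}

def zpowersHomZMod (g : G) (hg : g ^ n = 1) : Multiplicative (ZMod n) →* G :=
  AddMonoidHom.toMultiplicativeLeft <| ZMod.lift n
    ⟨zmultiplesHom (Additive G) (Additive.ofMul g), by
      show (n : ℤ) • Additive.ofMul g = 0
      rw [natCast_zsmul, ← ofMul_pow, hg, ofMul_one]⟩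

theorem zpowersHomZMod_ofAdd_intCast (g : G) (hg : g ^ n = 1) (k : ℤ) :
    zpowersHomZMod g hg (ofAdd (k : ZMod n)) = g ^ k := by
  simp [zpowersHomZMod]

theorem zpowersHomZMod_ofAdd_one (g : G) (hg : g ^ n = 1) :
    zpowersHomZMod g hg (ofAdd 1) = g := by
  simpa using zpowersHomZMod_ofAdd_intCast g hg 1

theorem ZMod.exists_eq_ofAdd_one_pow [NeZero n] (x : Multiplicative (ZMod n)) :
    ∃ k < n, x = ofAdd 1 ^ k :=
  ⟨x.toAdd.val, x.toAdd.val_lt, by rw [← ofAdd_nsmul, nsmul_one, ZMod.natCast_zmod_val]; rfl⟩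

theorem MonoidHom.ext_multiplicative_zmod [NeZero n] {M : Type*} [Monoid M]
    {f f' : Multiplicative (ZMod n) →* M} (h : f (ofAdd 1) = f' (ofAdd 1)) : f = f' := by
  refine MonoidHom.ext fun x => ?_
  obtain ⟨k, -, rfl⟩ := ZMod.exists_eq_ofAdd_one_pow x
  rw [map_pow, map_pow, h]

end ZModHom

theorem inv_pow_mul_mul_pow_eq_zpow {G : Type*} [Group G] {a b : G} {r : ℤ}
    (h : b⁻¹ * a * b = a ^ r) (k : ℕ) : (b ^ k)⁻¹ * a * b ^ k = a ^ (r ^ k) := by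
  induction k with
  | zero => simp
  | succ k ih =>
    calc (b ^ (k + 1))⁻¹ * a * b ^ (k + 1) = b⁻¹ * ((b ^ k)⁻¹ * a * b ^ k) * b⁻¹⁻¹ := by group
      _ = a ^ (r ^ (k + 1)) := by rw [ih, ← conj_zpow, inv_inv, h, ← zpow_mul, pow_succ']

namespace ZMod

variable (m : ℕ)

def unitsMulAut : (ZMod m)ˣ →* MulAut (Multiplicative (ZMod m)) :=
  (MulAutMultiplicative (ZMod m)).symm.toMonoidHom.comp
    (DistribMulAction.toAddAut (ZMod m)ˣ (ZMod m))

variable {m}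

theorem unitsMulAut_apply (c : (ZMod m)ˣ) (x : Multiplicative (ZMod m)) :
    unitsMulAut m c x = ofAdd (c * x.toAdd) := rfl

theorem surjective_unitsMulAut_div_self {c : (ZMod m)ˣ} (hc : IsUnit ((c : ZMod m) - 1)) :
    Function.Surjective fun y => unitsMulAut m c y / y := by
  obtain ⟨u, hu⟩ := hc
  refine fun z => ⟨ofAdd (↑u⁻¹ * z.toAdd), ?_⟩
  simp only [unitsMulAut_apply, toAdd_ofAdd, ← ofAdd_sub, ← sub_one_mul, ← hu,
    Units.mul_inv_cancel_left, ofAdd_toAdd]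

theorem isUnit_intCast_of_gcd_eq_one {a : ℤ} (h : Int.gcd m a = 1) : IsUnit (a : ZMod m) := by
  have := (Int.isCoprime_iff_gcd_eq_one.mpr h).map (Int.castRingHom (ZMod m))
  exact isCoprime_zero_left.mp (by simpa using this)

theorem exists_unitsHom_ofAdd_one_eq {n : ℕ} [NeZero n] {r : ℤ}
    (hr : (m : ℤ) ∣ r ^ n - 1) :
    ∃ χ : Multiplicative (ZMod n) →* (ZMod m)ˣ, (χ (ofAdd 1) : ZMod m) = r := by
  have hrn : (r : ZMod m) ^ n = 1 := by
    simpa using ((intCast_eq_intCast_iff_dvd_sub 1 (r ^ n) m).mpr hr).symm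
  exact ⟨zpowersHomZMod (Units.ofPowEqOne _ n hrn (NeZero.ne n)) (Units.pow_ofPowEqOne _ _),
    by rw [zpowersHomZMod_ofAdd_one, Units.val_ofPowEqOne]⟩

theorem isUnit_unitsHom_sub_one {n : ℕ} [NeZero n] {r : ℤ}
    {χ : Multiplicative (ZMod n) →* (ZMod m)ˣ} (hχ : (χ (ofAdd 1) : ZMod m) = r)
    (hg : ∀ k : ℕ, 1 ≤ k → k < n → Int.gcd (m : ℤ) (r ^ k - 1) = 1)
    {h : Multiplicative (ZMod n)} (hh : h ≠ 1) : IsUnit ((χ h : ZMod m) - 1) := by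
  obtain ⟨k, hkn, rfl⟩ := exists_eq_ofAdd_one_pow h
  have hk : 1 ≤ k := Nat.one_le_iff_ne_zero.mpr fun hk => hh (by rw [hk, pow_zero])
  rw [map_pow, Units.val_pow_eq_pow_val, hχ]
  exact_mod_cast isUnit_intCast_of_gcd_eq_one (hg k hk hkn)

end ZMod

abbrev ZMModel {m n : ℕ} (χ : Multiplicative (ZMod n) →* (ZMod m)ˣ) : Type :=
  Multiplicative (ZMod m) ⋊[(ZMod.unitsMulAut m).comp χ] Multiplicative (ZMod n)

namespace ZM

open SemidirectProduct ZMod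

variable {m n : ℕ} {r : ℤ}

theorem ZMa_pow : ZMa m n r ^ m = 1 :=
  (map_pow _ _ _).symm.trans (PresentedGroup.one_of_mem (by simp [ZMrels]))

theorem ZMb_pow : ZMb m n r ^ n = 1 :=
  (map_pow _ _ _).symm.trans (PresentedGroup.one_of_mem (by simp [ZMrels]))

theorem ZMb_inv_mul_ZMa_mul_ZMb : (ZMb m n r)⁻¹ * ZMa m n r * ZMb m n r = ZMa m n r ^ r := by
  have h := PresentedGroup.one_of_mem (rels := ZMrels m n r) (x := (FreeGroup.of false)⁻¹ *
    FreeGroup.of true * FreeGroup.of false * (FreeGroup.of true) ^ (-r)) (by simp [ZMrels])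
  rwa [map_mul, map_zpow, zpow_neg, mul_inv_eq_one, map_mul, map_mul, map_inv] at h

variable [NeZero m] [NeZero n] (χ : Multiplicative (ZMod n) →* (ZMod m)ˣ)
  (hχ : (χ (ofAdd 1) : ZMod m) = r)

-- `b` goes to the inverse generator: conjugation by `inr g` acts as `φ g`, but `b⁻¹ a b = a ^ r`.
def toModel : ZM m n r →* ZMModel χ :=
  PresentedGroup.toGroup (f := fun | true => inl (ofAdd 1) | false => inr (ofAdd (-1))) <| by
    rintro w (rfl | rfl | rfl) <;>
      simp only [map_pow, map_mul, map_inv, map_zpow, FreeGroup.lift_apply_of]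
    · rw [← map_pow, ← ofAdd_nsmul, nsmul_one, ZMod.natCast_self, ofAdd_zero, map_one]
    · rw [← map_pow, ← ofAdd_nsmul, smul_neg, nsmul_one, ZMod.natCast_self, neg_zero, ofAdd_zero,
        map_one]
    · rw [← map_inv inr, ← inl_aut_inv, ← map_zpow, ← map_mul, ← map_inv, ← ofAdd_neg, neg_neg]
      ext <;> simp [unitsMulAut_apply, hχ, ← ofAdd_zsmul]

def ofModel : ZMModel χ →* ZM m n r :=
  SemidirectProduct.lift (zpowersHomZMod (ZMa m n r) ZMa_pow)
    (zpowersHomZMod (ZMb m n r)⁻¹ (by rw [inv_pow, ZMb_pow, inv_one])) <| by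
    intro g
    obtain ⟨k, -, rfl⟩ := ZMod.exists_eq_ofAdd_one_pow g
    refine MonoidHom.ext_multiplicative_zmod ?_
    rw [MonoidHom.comp_apply, MonoidHom.comp_apply, MulEquiv.coe_toMonoidHom,
      MonoidHom.comp_apply, unitsMulAut_apply, map_pow, Units.val_pow_eq_pow_val, hχ, toAdd_ofAdd,
      mul_one, ← Int.cast_pow, zpowersHomZMod_ofAdd_intCast, MulEquiv.coe_toMonoidHom,
      zpowersHomZMod_ofAdd_one, map_pow, zpowersHomZMod_ofAdd_one, MulAut.conj_apply, inv_pow,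
      inv_inv]
    exact (inv_pow_mul_mul_pow_eq_zpow ZMb_inv_mul_ZMa_mul_ZMb k).symm

def mulEquivModel : ZM m n r ≃* ZMModel χ :=
  (toModel χ hχ).toMulEquiv (ofModel χ hχ)
    (PresentedGroup.ext fun x => by
      cases x <;> simp [toModel, ofModel, zpowersHomZMod_ofAdd_one, ZMa, ZMb])
    (hom_ext
      (MonoidHom.ext_multiplicative_zmod <| by
        simp [toModel, ofModel, zpowersHomZMod_ofAdd_one, ZMa])
      (MonoidHom.ext_multiplicative_zmod <| by
        simp [toModel, ofModel, zpowersHomZMod_ofAdd_one, ZMb]))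

end ZM

theorem stmt16_general (p q u v : ℕ) (hp : p.Prime) (hq : q.Prime)
    (m n : ℕ) (r : ℤ) (hm : m = p ^ u) (hn : n = q ^ v)
    (hr : (m : ℤ) ∣ r ^ n - 1)
    (hg : ∀ k : ℕ, 1 ≤ k → k < n → Int.gcd (m : ℤ) (r ^ k - 1) = 1) :
    (∀ H K : Subgroup (ZM m n r), H.Normal → K.Normal → H ≤ K ∨ K ≤ H) ∧
    Nat.card {H : Subgroup (ZM m n r) // H.Normal} = u + v + 1 := by
  subst hm hn
  have : NeZero (p ^ u) := ⟨pow_ne_zero _ hp.ne_zero⟩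
  have : NeZero (q ^ v) := ⟨pow_ne_zero _ hq.ne_zero⟩
  obtain ⟨χ, hχ⟩ := ZMod.exists_unitsHom_ofAdd_one_eq hr
  have hφ : ∀ h ≠ 1, Function.Surjective fun y => (ZMod.unitsMulAut _).comp χ h y / y :=
    fun h hh => ZMod.surjective_unitsMulAut_div_self (ZMod.isUnit_unitsHom_sub_one hχ hg hh)
  have hcardA : Nat.card (Multiplicative (ZMod (p ^ u))) = p ^ u := by simp
  have hcardB : Nat.card (Multiplicative (ZMod (q ^ v))) = q ^ v := by simp
  let e := ZM.mulEquivModel χ hχ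
  refine ⟨fun H K hH hK => ?_, ?_⟩
  · rw [← e.mapSubgroup.le_iff_le, ← e.mapSubgroup.le_iff_le]
    exact (SemidirectProduct.isChain_setOf_normal hφ
      (IsCyclic.isChain_subgroup_of_card_eq_prime_pow hp hcardA)
      (IsCyclic.isChain_subgroup_of_card_eq_prime_pow hq hcardB)).total
      (MulEquiv.normal_map_iff.mpr hH) (MulEquiv.normal_map_iff.mpr hK)
  · have : Nat.card {H : Subgroup (ZMModel χ) // H.Normal} + 1 = _ :=
      SemidirectProduct.card_normal_add_one hφ
    rw [IsCyclic.card_subgroup_of_card_eq_prime_pow hp hcardA,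
      IsCyclic.card_subgroup_of_card_eq_prime_pow hq hcardB] at this
    rw [Nat.card_congr (e.mapSubgroup.toEquiv.subtypeEquiv fun H => MulEquiv.normal_map_iff.symm)]
    omega

theorem stmt16 (p q u v : ℕ) (hp : p.Prime) (hq : q.Prime)
    (hu : 0 < u) (hv : 0 < v) (m n : ℕ) (r : ℤ) (hm : m = p ^ u) (hn : n = q ^ v)
    (hco : Nat.Coprime m n) (hco2 : IsCoprime (m : ℤ) (r - 1))
    (hr : (m : ℤ) ∣ r ^ n - 1)
    (hg : ∀ k : ℕ, 1 ≤ k → k < n → Int.gcd (m : ℤ) (r ^ k - 1) = 1) :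
    (∀ H K : Subgroup (ZM m n r), H.Normal → K.Normal → H ≤ K ∨ K ≤ H) ∧
    Nat.card {H : Subgroup (ZM m n r) // H.Normal} = u + v + 1 :=
  stmt16_general p q u v hp hq m n r hm hn hr hg
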